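/- arXiv:2512.10042 — 6 statements merged into one kernel-verified Lean document; each statement's English description precedes it below -/
import Mathlib

section
/- For every pair of functions ν, μ : S → ℝ and every constant C ∈ ℝ, the objective L̃ is invariant under the simultaneous constant shift ν ↦ ν + C/(1−γ) and μ ↦ μ + C; that is, L̃(ν + (C/(1−γ))·𝟙, μ + C·𝟙) = L̃(ν, μ), where 𝟙 denotes the all-ones function on S. -/
open scoped BigOperators

noncomputable def eFn {S A : Type*} [Fintype S] (γ : ℝ) (T : S → A → S → ℝ)
    (ν μ : S → ℝ) (s : S) (a : A) : ℝ :=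
  μ s + γ * ∑ s', T s a s' * ν s' - ν s

noncomputable def Ltilde {S A : Type*} [Fintype S] [Fintype A] (γ : ℝ) (p0 : S → ℝ)
    (T : S → A → S → ℝ) (dD : S → A → ℝ) (α : ℝ) (φ : ℝ → ℝ) (ν μ : S → ℝ) : ℝ :=
  (1 - γ) * ∑ s, p0 s * ν s
    + ∑ s, ∑ a, dD s a * (α * φ (eFn γ T ν μ s a / α))
    + Real.log (∑ s, Real.exp (-μ s))

/-! Shifting `ν` by `b` and `μ` by `c` shifts the linear term by `(1 - γ) b`, every residual
`e_{ν,μ}` by `c - (1 - γ) b` and the log-partition term by `-c`; for `b = c / (1 - γ)` the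
residuals are unchanged and the other two shifts cancel. -/

open Finset

theorem Finset.sum_mul_add_const_of_sum_eq_one {ι : Type*} [Fintype ι] {w : ι → ℝ}
    (hw : ∑ i, w i = 1) (f : ι → ℝ) (c : ℝ) :
    ∑ i, w i * (f i + c) = ∑ i, w i * f i + c := by
  simp only [mul_add, sum_add_distrib, ← sum_mul, hw, one_mul]

theorem eFn_add_const {S A : Type*} [Fintype S] {γ : ℝ} {T : S → A → S → ℝ}
    (hT : ∀ s a, ∑ s', T s a s' = 1) (ν μ : S → ℝ) (b c : ℝ) (s : S) (a : A) :
    eFn γ T (fun s => ν s + b) (fun s => μ s + c) s a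
      = eFn γ T ν μ s a + (c - (1 - γ) * b) := by
  simp only [eFn, sum_mul_add_const_of_sum_eq_one (hT s a)]
  ring

theorem Real.log_sum_exp_neg_add_const {ι : Type*} [Fintype ι] [Nonempty ι]
    (μ : ι → ℝ) (c : ℝ) :
    Real.log (∑ i, Real.exp (-(μ i + c))) = Real.log (∑ i, Real.exp (-μ i)) - c := by
  have hpos : 0 < ∑ i, Real.exp (-μ i) := sum_pos (fun i _ => Real.exp_pos _) univ_nonempty
  have hfactor : ∑ i, Real.exp (-(μ i + c)) = Real.exp (-c) * ∑ i, Real.exp (-μ i) := by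
    simp only [mul_sum, ← Real.exp_add, neg_add, add_comm]
  rw [hfactor, Real.log_mul (Real.exp_ne_zero _) hpos.ne', Real.log_exp]
  ring

theorem stmt0_general {S A : Type*} [Fintype S] [Fintype A] [Nonempty S]
    (γ : ℝ) (hγ : γ ∈ Set.Ioo (0:ℝ) 1)
    (p0 : S → ℝ) (hp0sum : ∑ s, p0 s = 1)
    (T : S → A → S → ℝ)
    (hTsum : ∀ s a, ∑ s', T s a s' = 1)
    (dD : S → A → ℝ)
    (α : ℝ) (φ : ℝ → ℝ)
    (ν μ : S → ℝ) (C : ℝ) :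
    Ltilde γ p0 T dD α φ (fun s => ν s + C / (1 - γ)) (fun s => μ s + C)
      = Ltilde γ p0 T dD α φ ν μ := by
  have hshift : (1 - γ) * (C / (1 - γ)) = C := mul_div_cancel₀ C (by linarith [hγ.2])
  simp only [Ltilde, eFn_add_const hTsum, hshift, sub_self, add_zero]
  rw [sum_mul_add_const_of_sum_eq_one hp0sum, mul_add, hshift, Real.log_sum_exp_neg_add_const]
  ring

theorem stmt0 {S A : Type*} [Fintype S] [Fintype A] [Nonempty S] [Nonempty A]
    (γ : ℝ) (hγ : γ ∈ Set.Ioo (0:ℝ) 1)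
    (p0 : S → ℝ) (hp0 : ∀ s, 0 ≤ p0 s) (hp0sum : ∑ s, p0 s = 1)
    (T : S → A → S → ℝ) (hT : ∀ s a s', 0 ≤ T s a s')
    (hTsum : ∀ s a, ∑ s', T s a s' = 1)
    (dD : S → A → ℝ) (hdD : ∀ s a, 0 ≤ dD s a) (hdDsum : ∑ s, ∑ a, dD s a = 1)
    (α : ℝ) (hα : 0 < α) (φ : ℝ → ℝ)
    (ν μ : S → ℝ) (C : ℝ) :
    Ltilde γ p0 T dD α φ (fun s => ν s + C / (1 - γ)) (fun s => μ s + C)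
      = Ltilde γ p0 T dD α φ ν μ :=
  stmt0_general γ hγ p0 hp0sum T hTsum dD α φ ν μ C
end

section
/- For every y ∈ ℝ, the supremum over x ≥ 0 of x·y − f_softχ²(x) equals exp(y) − 1 if y < 0, and equals y²/2 + y if y ≥ 0. That is, the nonnegative Fenchel conjugate of the softened chi-square function is (f_softχ²)₊*(y) = exp(y) − 1 for y < 0 and (f_softχ²)₊*(y) = y²/2 + y for y ≥ 0. -/
/-- The softened chi-square function (its values on `[0,∞)` are the ones that matter):
`f(0) = 1`, `f(x) = x log x − x + 1` for `0 < x < 1`, and `f(x) = (x−1)²/2` for `x ≥ 1`.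
(Note `0 * log 0 − 0 + 1 = 1` in Lean's convention, so the first clause covers `x = 0` too.) -/
noncomputable def fsoftChiSq (x : ℝ) : ℝ :=
  if x < 1 then x * Real.log x - x + 1 else (x - 1) ^ 2 / 2

theorem stmt11 (y : ℝ) :
    sSup ((fun x => x * y - fsoftChiSq x) '' Set.Ici (0:ℝ))
      = if y < 0 then Real.exp y - 1 else y ^ 2 / 2 + y := by
  have key : IsGreatest ((fun x => x * y - fsoftChiSq x) '' Set.Ici (0:ℝ))
      (if y < 0 then Real.exp y - 1 else y ^ 2 / 2 + y) := by
    constructor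
    · split_ifs with hy
      · refine ⟨Real.exp y, (Real.exp_pos y).le, ?_⟩
        have h1 : Real.exp y < 1 := Real.exp_lt_one_iff.mpr hy
        simp only [fsoftChiSq, if_pos h1, Real.log_exp]
        ring
      · push_neg at hy
        refine ⟨1 + y, Set.mem_Ici.mpr (by linarith), ?_⟩
        have h1 : ¬ (1 + y < 1) := by linarith
        simp only [fsoftChiSq, if_neg h1]
        ring
    · rintro _ ⟨x, hx, rfl⟩
      simp only [Set.mem_Ici] at hx
      simp only [fsoftChiSq]
      split_ifs with hx1 hy hy
      · -- x < 1, y < 0 : x*y - (x log x - x + 1) ≤ exp y - 1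
        rcases eq_or_lt_of_le hx with h0 | h0
        · simp only [← h0, Real.log_zero]
          nlinarith [Real.exp_pos y]
        · have h2 : y - Real.log x + 1 ≤ Real.exp (y - Real.log x) :=
            Real.add_one_le_exp _
          have h3 : x * Real.exp (y - Real.log x) = Real.exp y := by
            rw [Real.exp_sub, Real.exp_log h0]
            field_simp
          nlinarith [mul_le_mul_of_nonneg_left h2 hx]
      · -- x < 1, y ≥ 0 : need x log x - x + 1 ≥ 0 and x*y ≤ y
        push_neg at hy
        have hxlog : x - 1 ≤ x * Real.log x := by
          rcases eq_or_lt_of_le hx with h0 | h0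
          · simp [← h0]
          · have := Real.log_le_sub_one_of_pos (show (0:ℝ) < x⁻¹ by positivity)
            rw [Real.log_inv] at this
            have := mul_le_mul_of_nonneg_left this hx
            have hxi : x * x⁻¹ = 1 := mul_inv_cancel₀ h0.ne'
            nlinarith
        nlinarith [mul_le_mul_of_nonneg_right hx1.le hy]
      · -- x ≥ 1, y < 0
        push_neg at hx1
        have h1 : x * y ≤ y := by nlinarith
        have h2 : y + 1 ≤ Real.exp y := Real.add_one_le_exp y
        nlinarith [sq_nonneg (x - 1)]
      · -- x ≥ 1, y ≥ 0
        nlinarith [sq_nonneg (y - (x - 1))]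
  exact key.csSup_eq
end

section
/- For every y ∈ ℝ, the supremum over x ≥ 0 of x·y − f_softχ²(x) is attained at a unique point, namely at x* = exp(y) if y < 0 and at x* = y + 1 if y ≥ 0 (i.e., the inverse of the derivative of f_softχ² is given by (f_softχ²')⁻¹(y) = exp(y) for y < 0 and (f_softχ²')⁻¹(y) = y + 1 for y ≥ 0). -/
open Real

theorem mul_sub_mul_log_add_lt_exp {y z : ℝ} (hz : 0 ≤ z) (hzy : z ≠ exp y) :
    z * y - (z * log z - z) < exp y := by
  rcases hz.eq_or_lt with rfl | hz
  · simpa using exp_pos y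
  have hlog : y - log z ≠ 0 := fun h ↦ hzy (by rw [sub_eq_zero.mp h, exp_log hz])
  calc z * y - (z * log z - z) = z * (y - log z + 1) := by ring
    _ < z * exp (y - log z) := mul_lt_mul_of_pos_left (add_one_lt_exp hlog) hz
    _ = exp y := by rw [exp_sub, exp_log hz]; field_simp

theorem fsoftChiSq_of_lt_one {x : ℝ} (hx : x < 1) : fsoftChiSq x = x * log x - x + 1 :=
  if_pos hx

theorem fsoftChiSq_of_one_le {x : ℝ} (hx : 1 ≤ x) : fsoftChiSq x = (x - 1) ^ 2 / 2 :=
  if_neg hx.not_gt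

theorem mul_sub_fsoftChiSq_lt_of_neg {y z : ℝ} (hy : y < 0) (hz : 0 ≤ z)
    (hzy : z ≠ exp y) :
    z * y - fsoftChiSq z < exp y * y - fsoftChiSq (exp y) := by
  rw [fsoftChiSq_of_lt_one (exp_lt_one_iff.mpr hy), log_exp]
  rcases lt_or_ge z 1 with hz1 | hz1
  · rw [fsoftChiSq_of_lt_one hz1]
    linarith [mul_sub_mul_log_add_lt_exp hz hzy]
  · rw [fsoftChiSq_of_one_le hz1]
    nlinarith [add_one_lt_exp hy.ne, sq_nonneg (z - 1)]

theorem mul_sub_fsoftChiSq_lt_of_nonneg {y z : ℝ} (hy : 0 ≤ y) (hz : 0 ≤ z)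
    (hzy : z ≠ y + 1) :
    z * y - fsoftChiSq z < (y + 1) * y - fsoftChiSq (y + 1) := by
  rw [fsoftChiSq_of_one_le (x := y + 1) (by linarith)]
  rcases lt_or_ge z 1 with hz1 | hz1
  · rw [fsoftChiSq_of_lt_one hz1]
    nlinarith [self_sub_one_lt_mul_log hz hz1.ne]
  · rw [fsoftChiSq_of_one_le hz1]
    nlinarith [sq_pos_of_ne_zero (sub_ne_zero.mpr hzy)]

theorem stmt12 (y : ℝ) (xstar : ℝ) (hxstar : xstar = if y < 0 then Real.exp y else y + 1) :
    (0 ≤ xstar) ∧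
      (∀ z : ℝ, 0 ≤ z → z * y - fsoftChiSq z ≤ xstar * y - fsoftChiSq xstar) ∧
      (∀ x : ℝ, 0 ≤ x →
        (∀ z : ℝ, 0 ≤ z → z * y - fsoftChiSq z ≤ x * y - fsoftChiSq x) → x = xstar) := by
  have hxstar_nonneg : 0 ≤ xstar := by
    split_ifs at hxstar with hy <;> subst hxstar
    · exact (exp_pos y).le
    · linarith
  have strict_max :
      ∀ z, 0 ≤ z → z ≠ xstar → z * y - fsoftChiSq z < xstar * y - fsoftChiSq xstar := by
    split_ifs at hxstar with hy <;> subst hxstar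
    · exact fun z ↦ mul_sub_fsoftChiSq_lt_of_neg hy
    · exact fun z ↦ mul_sub_fsoftChiSq_lt_of_nonneg (not_lt.mp hy)
  refine ⟨hxstar_nonneg, fun z hz ↦ ?_, fun x hx hmax ↦ ?_⟩
  · rcases eq_or_ne z xstar with rfl | hne
    · exact le_rfl
    · exact (strict_max z hz hne).le
  · by_contra hne
    exact (hmax xstar hxstar_nonneg).not_gt (strict_max x hx hne)
end

section
/- Let S and A be finite nonempty sets, α > 0, let d^D : S × A → ℝ satisfy d^D(s,a) > 0 for all (s,a) and ∑_{s,a} d^D(s,a) = 1, and let f : ℝ → ℝ be strictly convex. Then the regularized state-entropy objective G(d) := ∑_s (−(∑_a d(s,a)) · log(∑_a d(s,a))) − α ∑_{s,a} d^D(s,a) · f(d(s,a)/d^D(s,a)) (with the convention 0·log 0 = 0) is strictly concave on the convex set of nonnegative functions d : S × A → ℝ. -/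
/-!
The entropy term is concave because each state marginal `∑ a, d s a` is linear in `d` and
`x ↦ -x log x` is concave on `[0, ∞)`. Each summand `dD s a * f (d s a / dD s a)` of the
divergence is strictly convex in its own coordinate (a positive multiple of `f` after an
injective rescaling), and a sum of strictly convex functions of separate coordinates is strictly
convex, since two distinct points differ in some coordinate. Concave minus `α > 0` times
strictly convex is strictly concave.
-/

open Set Finset Real

section

variable {𝕜 E β : Type*}

theorem StrictConvexOn.smul [CommSemiring 𝕜] [PartialOrder 𝕜] [AddCommMonoid E] [SMul 𝕜 E]
    [AddCommMonoid β] [PartialOrder β] [Module 𝕜 β] [PosSMulStrictMono 𝕜 β]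
    {s : Set E} {f : E → β} {c : 𝕜} (hc : 0 < c) (hf : StrictConvexOn 𝕜 s f) :
    StrictConvexOn 𝕜 s fun x => c • f x :=
  ⟨hf.1, fun x hx y hy hxy a b ha hb hab =>
    calc
      c • f (a • x + b • y) < c • (a • f x + b • f y) :=
        smul_lt_smul_of_pos_left (hf.2 hx hy hxy ha hb hab) hc
      _ = a • c • f x + b • c • f y := by rw [smul_add, smul_comm c, smul_comm c]⟩

theorem StrictConvexOn.comp_div_const [Field 𝕜] [LinearOrder 𝕜] [IsStrictOrderedRing 𝕜]
    [AddCommMonoid β] [PartialOrder β] [Module 𝕜 β]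
    {f : 𝕜 → β} (hf : StrictConvexOn 𝕜 univ f) {c : 𝕜} (hc : c ≠ 0) :
    StrictConvexOn 𝕜 univ fun x => f (x / c) :=
  ⟨convex_univ, fun x _ y _ hxy a b ha hb hab => by
    have hne : x / c ≠ y / c := fun h => hxy ((div_left_inj' hc).1 h)
    simpa only [smul_eq_mul, add_div, mul_div_assoc] using
      hf.2 trivial trivial hne ha hb hab⟩

theorem ConcaveOn.sum [Semiring 𝕜] [PartialOrder 𝕜] [AddCommMonoid E] [SMul 𝕜 E]
    [AddCommMonoid β] [PartialOrder β] [IsOrderedAddMonoid β] [Module 𝕜 β] {ι : Type*}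
    {s : Set E} {f : ι → E → β} (t : Finset ι) (hs : Convex 𝕜 s)
    (hf : ∀ i ∈ t, ConcaveOn 𝕜 s (f i)) :
    ConcaveOn 𝕜 s fun x => ∑ i ∈ t, f i x := by
  classical
  induction t using Finset.induction_on with
  | empty => simpa using concaveOn_const (0 : β) hs
  | insert i t hi ih =>
    simp only [sum_insert hi]
    exact (hf i (mem_insert_self i t)).add (ih fun j hj => hf j (mem_insert_of_mem hj))

theorem StrictConvexOn.sum_apply [Semiring 𝕜] [PartialOrder 𝕜] {ι : Type*} [Fintype ι]
    {E : ι → Type*} [∀ i, AddCommMonoid (E i)] [∀ i, Module 𝕜 (E i)]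
    [AddCommMonoid β] [PartialOrder β] [IsOrderedCancelAddMonoid β] [Module 𝕜 β]
    {f : ∀ i, E i → β} (hf : ∀ i, StrictConvexOn 𝕜 univ (f i)) :
    StrictConvexOn 𝕜 univ fun x : ∀ i, E i => ∑ i, f i (x i) := by
  refine ⟨convex_univ, fun x _ y _ hxy a b ha hb hab => ?_⟩
  obtain ⟨i, hi⟩ := Function.ne_iff.1 hxy
  simp only [smul_sum, ← sum_add_distrib, Pi.add_apply, Pi.smul_apply]
  exact sum_lt_sum (fun j _ => (hf j).convexOn.2 trivial trivial ha.le hb.le hab)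
    ⟨i, mem_univ i, (hf i).2 trivial trivial hi ha hb hab⟩

end

theorem concaveOn_sum_negMulLog_sum {S A : Type*} [Fintype S] [Fintype A] :
    ConcaveOn ℝ {d : S → A → ℝ | ∀ s a, 0 ≤ d s a} fun d => ∑ s, negMulLog (∑ a, d s a) := by
  have hconvex : Convex ℝ {d : S → A → ℝ | ∀ s a, 0 ≤ d s a} := convex_Ici 0
  refine ConcaveOn.sum _ hconvex fun s _ => ?_
  let rowSum : (S → A → ℝ) →ₗ[ℝ] ℝ := (∑ a, LinearMap.proj a) ∘ₗ LinearMap.proj s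
  have hrow : ∀ d, rowSum d = ∑ a, d s a := fun d => by simp [rowSum]
  refine ((concaveOn_negMulLog.comp_linearMap rowSum).subset (fun d hd => ?_) hconvex).congr
    fun d _ => by simp [hrow]
  simpa [hrow] using sum_nonneg fun a _ => hd s a

theorem stmt13_general {S A : Type*} [Fintype S] [Fintype A]
    (α : ℝ) (hα : 0 < α)
    (dD : S → A → ℝ) (hdD : ∀ s a, 0 < dD s a)
    (f : ℝ → ℝ) (hf : StrictConvexOn ℝ Set.univ f) :
    StrictConcaveOn ℝ {d : S → A → ℝ | ∀ s a, 0 ≤ d s a}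
      (fun d : S → A → ℝ =>
        (∑ s, -((∑ a, d s a) * Real.log (∑ a, d s a)))
          - α * ∑ s, ∑ a, dD s a * f (d s a / dD s a)) := by
  have hdiv : StrictConvexOn ℝ univ fun d : S → A → ℝ => ∑ s, ∑ a, dD s a * f (d s a / dD s a) :=
    StrictConvexOn.sum_apply fun s => StrictConvexOn.sum_apply fun a =>
      (hf.comp_div_const (hdD s a).ne').smul (hdD s a)
  have := concaveOn_sum_negMulLog_sum.sub_strictConvexOn
    ((hdiv.smul hα).subset (subset_univ _) (convex_Ici 0))
  simpa only [negMulLog, neg_mul, smul_eq_mul, Pi.sub_def] using this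

theorem stmt13 {S A : Type*} [Fintype S] [Fintype A] [Nonempty S] [Nonempty A]
    (α : ℝ) (hα : 0 < α)
    (dD : S → A → ℝ) (hdD : ∀ s a, 0 < dD s a) (hdDsum : ∑ s, ∑ a, dD s a = 1)
    (f : ℝ → ℝ) (hf : StrictConvexOn ℝ Set.univ f) :
    StrictConcaveOn ℝ {d : S → A → ℝ | ∀ s a, 0 ≤ d s a}
      (fun d : S → A → ℝ =>
        (∑ s, -((∑ a, d s a) * Real.log (∑ a, d s a)))
          - α * ∑ s, ∑ a, dD s a * f (d s a / dD s a)) :=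
  stmt13_general α hα dD hdD f hf
end

section
/- Let d : S × A → ℝ be nonnegative and satisfy the Bellman flow constraint ∑_{a'} d(s',a') = (1−γ) p₀(s') + γ ∑_{s,a} d(s,a) T(s'|s,a) for all s' ∈ S. Define a stationary Markov policy π by π(a|s) := d(s,a)/∑_{a'} d(s,a') whenever ∑_{a'} d(s,a') > 0, and π(a|s) := 1/|A| otherwise. Then d(s,a) = d̄^π(s) · π(a|s) for all (s,a) ∈ S × A; in particular, every nonnegative solution of the Bellman flow constraint is the discounted state–action occupancy of a stationary Markov policy, and its state marginal equals d̄^π. -/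
open scoped BigOperators

/-- The set of stationary Markov policies. -/
def policySet (S A : Type*) [Fintype A] : Set (S → A → ℝ) :=
  {π | (∀ s a, 0 ≤ π s a) ∧ ∀ s, ∑ a, π s a = 1}

/-- The transition matrix induced by a policy: `P_π(s,s') = ∑_a π(a|s) T(s'|s,a)`. -/
noncomputable def Pmat {S A : Type*} [Fintype A] (T : S → A → S → ℝ)
    (π : S → A → ℝ) : Matrix S S ℝ :=
  fun s s' => ∑ a, π s a * T s a s'

/-- The discounted state occupancy `d̄^π = (1−γ) ∑_t γ^t (P_πᵀ)^t p₀`. -/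
noncomputable def dbar {S A : Type*} [Fintype S] [DecidableEq S] [Fintype A]
    (γ : ℝ) (p0 : S → ℝ) (T : S → A → S → ℝ) (π : S → A → ℝ) (s : S) : ℝ :=
  (1 - γ) * ∑' t : ℕ, γ ^ t * ((Pmat T π).transpose ^ t).mulVec p0 s

/-- Shannon entropy of a state distribution, with the convention `0 · log 0 = 0`
(automatic since `Real.log 0 = 0`). -/
noncomputable def stateEntropy {S : Type*} [Fintype S] (d : S → ℝ) : ℝ :=
  ∑ s, -(d s * Real.log (d s))

/-! Normalizing `d` row by row gives a policy `π` with `d s a = ρ s * π s a`, where `ρ` is the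
state marginal of `d`, so the flow constraint reads `ρ ᵥ* (1 - γ • P_π) = (1 - γ) • p₀`. As `P_π`
is row-stochastic, the Neumann series `∑ₜ (γ • P_π) ^ t` converges entrywise and inverts
`1 - γ • P_π`; hence `ρ = (1 - γ) • p₀ ᵥ* ∑ₜ (γ • P_π) ^ t`, which is `d̄^π`. -/

open Matrix

theorem HasSum.vecMul {ι m n R : Type*} [Fintype m] [Ring R] [TopologicalSpace R]
    [IsTopologicalRing R] {f : ι → Matrix m n R} {M : Matrix m n R} (hf : HasSum f M)
    (v : m → R) : HasSum (fun i => v ᵥ* f i) (v ᵥ* M) :=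
  hf.map (AddMonoidHom.mk' (v ᵥ* ·) fun A B => vecMul_add A B v)
    (continuous_const.matrix_vecMul continuous_id)

section Occupancy

variable {S A : Type*} [Fintype S] [DecidableEq S] [Fintype A]

theorem Pmat_mem_rowStochastic {T : S → A → S → ℝ} (hT : ∀ s a s', 0 ≤ T s a s')
    (hTsum : ∀ s a, ∑ s', T s a s' = 1) {π : S → A → ℝ} (hπ : π ∈ policySet S A) :
    Pmat T π ∈ rowStochastic ℝ S := by
  refine mem_rowStochastic_iff_sum.2 ⟨fun s s' => ?_, fun s => ?_⟩
  · exact Finset.sum_nonneg fun a _ => mul_nonneg (hπ.1 s a) (hT s a s')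
  · simp only [Pmat]
    rw [Finset.sum_comm]
    simp [← Finset.mul_sum, hTsum, hπ.2 s]

theorem summable_pow_smul_of_mem_rowStochastic {M : Matrix S S ℝ} (hM : M ∈ rowStochastic ℝ S)
    {γ : ℝ} (hγ0 : 0 ≤ γ) (hγ1 : γ < 1) : Summable fun t : ℕ => (γ • M) ^ t := by
  refine Pi.summable.2 fun i => Pi.summable.2 fun j => ?_
  refine (summable_geometric_of_lt_one hγ0 hγ1).of_nonneg_of_le (fun t => ?_) (fun t => ?_)
  all_goals simp only [smul_pow, Matrix.smul_apply, smul_eq_mul]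
  · exact mul_nonneg (pow_nonneg hγ0 t) (nonneg_of_mem_rowStochastic (pow_mem hM t))
  · exact mul_le_of_le_one_right (pow_nonneg hγ0 t) (le_one_of_mem_rowStochastic (pow_mem hM t))

theorem dbar_eq_smul_vecMul_tsum (γ : ℝ) (p0 : S → ℝ) (T : S → A → S → ℝ) (π : S → A → ℝ)
    (hsum : Summable fun t : ℕ => (γ • Pmat T π) ^ t) :
    dbar γ p0 T π = (1 - γ) • p0 ᵥ* ∑' t : ℕ, (γ • Pmat T π) ^ t := by
  ext s
  rw [Pi.smul_apply, smul_eq_mul, ← (Pi.hasSum.1 (hsum.hasSum.vecMul p0) s).tsum_eq, dbar]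
  refine congrArg _ (tsum_congr fun t => ?_)
  rw [← transpose_pow, mulVec_transpose, smul_pow, vecMul_smul, Pi.smul_apply, smul_eq_mul]

theorem dbar_eq_of_flow {γ : ℝ} (hγ0 : 0 ≤ γ) (hγ1 : γ < 1) (p0 : S → ℝ)
    {T : S → A → S → ℝ} (hT : ∀ s a s', 0 ≤ T s a s') (hTsum : ∀ s a, ∑ s', T s a s' = 1)
    {π : S → A → ℝ} (hπ : π ∈ policySet S A) {ρ : S → ℝ}
    (hρ : ρ = (1 - γ) • p0 + γ • ρ ᵥ* Pmat T π) :
    dbar γ p0 T π = ρ := by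
  set X := γ • Pmat T π
  have hsum : Summable fun t : ℕ => X ^ t :=
    summable_pow_smul_of_mem_rowStochastic (Pmat_mem_rowStochastic hT hTsum hπ) hγ0 hγ1
  have hres : ρ ᵥ* (1 - X) = (1 - γ) • p0 := by
    rw [vecMul_sub, vecMul_one, vecMul_smul]
    nth_rewrite 1 [hρ]
    abel
  calc dbar γ p0 T π = (ρ ᵥ* (1 - X)) ᵥ* ∑' t : ℕ, X ^ t := by
        rw [dbar_eq_smul_vecMul_tsum γ p0 T π hsum, hres, smul_vecMul]
    _ = ρ := by rw [vecMul_vecMul, hsum.one_sub_mul_tsum_pow, vecMul_one]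

end Occupancy

section NormalizedPolicy

variable {S A : Type*} [Fintype A]

noncomputable def normalizedPolicy (d : S → A → ℝ) : S → A → ℝ := fun s a =>
  if 0 < ∑ a', d s a' then d s a / ∑ a', d s a' else 1 / (Fintype.card A)

variable {d : S → A → ℝ}

theorem normalizedPolicy_mem_policySet [Nonempty A] (hd : ∀ s a, 0 ≤ d s a) :
    normalizedPolicy d ∈ policySet S A := by
  refine ⟨fun s a => ?_, fun s => ?_⟩ <;> unfold normalizedPolicy <;> split_ifs with h
  · exact div_nonneg (hd s a) h.le
  · positivity
  · rw [← Finset.sum_div, div_self h.ne']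
  · simp

theorem sum_mul_normalizedPolicy (hd : ∀ s a, 0 ≤ d s a) (s : S) (a : A) :
    (∑ a', d s a') * normalizedPolicy d s a = d s a := by
  rcases (Finset.sum_nonneg fun a' _ => hd s a').lt_or_eq with h | h
  · rw [normalizedPolicy, if_pos h, mul_div_cancel₀ _ h.ne']
  · rw [← h, zero_mul, eq_comm]
    exact (Finset.sum_eq_zero_iff_of_nonneg fun a' _ => hd s a').1 h.symm a (Finset.mem_univ a)

end NormalizedPolicy

theorem sum_sum_mul_eq_vecMul_Pmat {S A : Type*} [Fintype S] [Fintype A] {d : S → A → ℝ}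
    {ρ : S → ℝ} {π : S → A → ℝ} (hd : ∀ s a, ρ s * π s a = d s a) (T : S → A → S → ℝ) (s' : S) :
    ∑ s, ∑ a, d s a * T s a s' = (ρ ᵥ* Pmat T π) s' := by
  simp only [vecMul, dotProduct, Pmat, Finset.mul_sum, ← hd, mul_assoc]

open scoped Classical

theorem stmt16_general {S A : Type*} [Fintype S] [DecidableEq S] [Fintype A]
    [Nonempty A]
    (γ : ℝ) (hγ : γ ∈ Set.Ioo (0:ℝ) 1)
    (p0 : S → ℝ)
    (T : S → A → S → ℝ) (hT : ∀ s a s', 0 ≤ T s a s')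
    (hTsum : ∀ s a, ∑ s', T s a s' = 1)
    (d : S → A → ℝ) (hd : ∀ s a, 0 ≤ d s a)
    (hflow : ∀ s', ∑ a', d s' a'
        = (1 - γ) * p0 s' + γ * ∑ s, ∑ a, d s a * T s a s')
    (π : S → A → ℝ)
    (hπdef : ∀ s a, π s a =
        if 0 < ∑ a', d s a' then d s a / ∑ a', d s a' else 1 / (Fintype.card A)) :
    (∀ s a, d s a = dbar γ p0 T π s * π s a) ∧
      ∀ s, ∑ a, d s a = dbar γ p0 T π s := by
  obtain rfl : π = normalizedPolicy d := funext₂ hπdef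
  have hfac := sum_mul_normalizedPolicy hd
  have hmarg : dbar γ p0 T (normalizedPolicy d) = fun s => ∑ a, d s a := by
    refine dbar_eq_of_flow hγ.1.le hγ.2 p0 hT hTsum (normalizedPolicy_mem_policySet hd)
      (funext fun s' => ?_)
    rw [hflow, sum_sum_mul_eq_vecMul_Pmat hfac]
    rfl
  rw [hmarg]
  exact ⟨fun s a => (hfac s a).symm, fun s => rfl⟩

theorem stmt16 {S A : Type*} [Fintype S] [DecidableEq S] [Fintype A]
    [Nonempty S] [Nonempty A]
    (γ : ℝ) (hγ : γ ∈ Set.Ioo (0:ℝ) 1)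
    (p0 : S → ℝ) (hp0 : ∀ s, 0 ≤ p0 s) (hp0sum : ∑ s, p0 s = 1)
    (T : S → A → S → ℝ) (hT : ∀ s a s', 0 ≤ T s a s')
    (hTsum : ∀ s a, ∑ s', T s a s' = 1)
    (d : S → A → ℝ) (hd : ∀ s a, 0 ≤ d s a)
    (hflow : ∀ s', ∑ a', d s' a'
        = (1 - γ) * p0 s' + γ * ∑ s, ∑ a, d s a * T s a s')
    (π : S → A → ℝ)
    (hπdef : ∀ s a, π s a =
        if 0 < ∑ a', d s a' then d s a / ∑ a', d s a' else 1 / (Fintype.card A)) :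
    (∀ s a, d s a = dbar γ p0 T π s * π s a) ∧
      ∀ s, ∑ a, d s a = dbar γ p0 T π s :=
  stmt16_general γ hγ p0 T hT hTsum d hd hflow π hπdef
end

section
/- There exist a finite MDP with three states and two actions — i.e., sets S and A with |S| = 3 and |A| = 2, a transition kernel T, an initial distribution p₀ — and a discount factor γ ∈ (0,1), such that every deterministic stationary policy π (one for which π(·|s) is a point mass for each state s) satisfies H(d̄^π) < sup_{π'} H(d̄^{π'}), where the supremum is over all stationary Markov policies; i.e., no deterministic stationary policy maximizes the state entropy, so any state-entropy-maximizing stationary Markov policy must be stochastic. -/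
open scoped BigOperators

/-! If the start state `0` branches into two absorbing states `1` and `2`, then
`d̄^π = (1 - γ, γ π(0|0), γ π(1|0))`. By the chain rule its entropy is
`h(γ) + γ h(π(0|0))`, with `h` the binary entropy: a deterministic policy gets only `h(γ)`,
the uniform one gets `h(γ) + γ log 2`. -/

open Matrix

theorem Matrix.pow_succ_mulVec_eq_of_mulVec_eq {n R : Type*} [Fintype n] [DecidableEq n]
    [CommSemiring R] {M : Matrix n n R} {x v : n → R} (hx : M *ᵥ x = v) (hv : M *ᵥ v = v)
    (t : ℕ) : (M ^ (t + 1)) *ᵥ x = v := by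
  induction t with
  | zero => simpa using hx
  | succ t ih => rw [pow_succ', ← mulVec_mulVec, ih, hv]

theorem dbar_eq_of_pow_succ_mulVec {S A : Type*} [Fintype S] [DecidableEq S] [Fintype A]
    {γ : ℝ} (hγ : |γ| < 1) {p0 v : S → ℝ} {T : S → A → S → ℝ} {π : S → A → ℝ}
    (h : ∀ t, ((Pmat T π).transpose ^ (t + 1)) *ᵥ p0 = v) :
    dbar γ p0 T π = (1 - γ) • p0 + γ • v := by
  funext s
  have hγ1 : 1 - γ ≠ 0 := by linarith [le_abs_self γ]
  have hterm : ∀ t : ℕ, γ ^ (t + 1) * ((Pmat T π).transpose ^ (t + 1) *ᵥ p0) s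
      = γ * v s * γ ^ t := fun t => by rw [h]; ring
  have htail : HasSum (fun t : ℕ => γ ^ (t + 1) * ((Pmat T π).transpose ^ (t + 1) *ᵥ p0) s)
      (γ * v s * (1 - γ)⁻¹) := by
    simpa only [hterm] using (hasSum_geometric_of_abs_lt_one hγ).mul_left (γ * v s)
  have hsum : Summable fun t : ℕ => γ ^ t * ((Pmat T π).transpose ^ t *ᵥ p0) s :=
    (summable_nat_add_iff 1).mp htail.summable
  rw [dbar, hsum.tsum_eq_zero_add, htail.tsum_eq]
  simp only [pow_zero, one_mul, one_mulVec, Pi.add_apply, Pi.smul_apply, smul_eq_mul]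
  field_simp

theorem stateEntropy_eq_sum_negMulLog {S : Type*} [Fintype S] (d : S → ℝ) :
    stateEntropy d = ∑ s, Real.negMulLog (d s) := by
  simp only [stateEntropy, Real.negMulLog, neg_mul]

/-- From state `0` the agent moves to state `1` (action `0`) or state `2` (action `1`);
states `1` and `2` are absorbing. -/
def forkKernel : Fin 3 → Fin 2 → Fin 3 → ℝ :=
  ![![![0, 1, 0], ![0, 0, 1]], ![![0, 1, 0], ![0, 1, 0]], ![![0, 0, 1], ![0, 0, 1]]]

def forkStart : Fin 3 → ℝ := ![1, 0, 0]

theorem forkKernel_nonneg (s : Fin 3) (a : Fin 2) (s' : Fin 3) : 0 ≤ forkKernel s a s' := by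
  fin_cases s <;> fin_cases a <;> fin_cases s' <;> simp [forkKernel]

theorem sum_forkKernel (s : Fin 3) (a : Fin 2) : ∑ s', forkKernel s a s' = 1 := by
  fin_cases s <;> fin_cases a <;> simp [forkKernel, Fin.sum_univ_three]

theorem forkStart_nonneg (s : Fin 3) : 0 ≤ forkStart s := by
  fin_cases s <;> simp [forkStart]

theorem sum_forkStart : ∑ s, forkStart s = 1 := by
  simp [forkStart, Fin.sum_univ_three]

theorem apply_one_eq_one_sub_of_mem_policySet {S : Type*} {π : S → Fin 2 → ℝ}
    (hπ : π ∈ policySet S (Fin 2)) (s : S) : π s 1 = 1 - π s 0 := by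
  have := hπ.2 s
  rw [Fin.sum_univ_two] at this
  linarith

section fork

variable {π : Fin 3 → Fin 2 → ℝ}

theorem transpose_Pmat_fork_mulVec_forkStart (hπ : π ∈ policySet (Fin 3) (Fin 2)) :
    (Pmat forkKernel π).transpose *ᵥ forkStart = ![0, π 0 0, 1 - π 0 0] := by
  funext s
  fin_cases s <;>
    simp [Matrix.mulVec, dotProduct, Pmat, forkKernel, forkStart, Fin.sum_univ_three,
      apply_one_eq_one_sub_of_mem_policySet hπ]

theorem transpose_Pmat_fork_mulVec_absorbed (hπ : π ∈ policySet (Fin 3) (Fin 2)) :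
    (Pmat forkKernel π).transpose *ᵥ ![0, π 0 0, 1 - π 0 0] = ![0, π 0 0, 1 - π 0 0] := by
  funext s
  fin_cases s <;>
    simp [Matrix.mulVec, dotProduct, Pmat, forkKernel, Fin.sum_univ_three,
      apply_one_eq_one_sub_of_mem_policySet hπ]

theorem dbar_fork {γ : ℝ} (hγ : |γ| < 1) (hπ : π ∈ policySet (Fin 3) (Fin 2)) :
    dbar γ forkStart forkKernel π = ![1 - γ, γ * π 0 0, γ * (1 - π 0 0)] := by
  rw [dbar_eq_of_pow_succ_mulVec hγ (Matrix.pow_succ_mulVec_eq_of_mulVec_eq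
    (transpose_Pmat_fork_mulVec_forkStart hπ) (transpose_Pmat_fork_mulVec_absorbed hπ))]
  funext s
  fin_cases s <;> simp [forkStart]

theorem stateEntropy_dbar_fork {γ : ℝ} (hγ : |γ| < 1) (hπ : π ∈ policySet (Fin 3) (Fin 2)) :
    stateEntropy (dbar γ forkStart forkKernel π)
      = Real.binEntropy γ + γ * Real.binEntropy (π 0 0) := by
  simp only [Real.binEntropy_eq_negMulLog_add_negMulLog_one_sub]
  rw [dbar_fork hγ hπ, stateEntropy_eq_sum_negMulLog, Fin.sum_univ_three]
  simp only [Matrix.cons_val_zero, Matrix.cons_val_one, Matrix.cons_val_two, Matrix.head_cons,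
    Matrix.tail_cons, Real.negMulLog_mul]
  ring

end fork

theorem stmt17 :
    ∃ (T : Fin 3 → Fin 2 → Fin 3 → ℝ) (p0 : Fin 3 → ℝ) (γ : ℝ),
      (∀ s a s', 0 ≤ T s a s') ∧ (∀ s a, ∑ s', T s a s' = 1) ∧
      (∀ s, 0 ≤ p0 s) ∧ (∑ s, p0 s = 1) ∧
      γ ∈ Set.Ioo (0:ℝ) 1 ∧
      ∀ π ∈ policySet (Fin 3) (Fin 2),
        (∀ s, ∃ a, π s a = 1 ∧ ∀ b, b ≠ a → π s b = 0) →
          stateEntropy (dbar γ p0 T π)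
            < sSup ((fun π' => stateEntropy (dbar γ p0 T π')) ''
                policySet (Fin 3) (Fin 2)) := by
  have hγ : |(2⁻¹ : ℝ)| < 1 := by norm_num [abs_of_pos]
  refine ⟨forkKernel, forkStart, 2⁻¹, forkKernel_nonneg, sum_forkKernel,
    forkStart_nonneg, sum_forkStart, by norm_num, ?_⟩
  intro π hπ hdet
  have hbdd : BddAbove ((fun π' => stateEntropy (dbar 2⁻¹ forkStart forkKernel π')) ''
      policySet (Fin 3) (Fin 2)) := by
    refine ⟨Real.binEntropy 2⁻¹ + 2⁻¹ * Real.log 2, ?_⟩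
    rintro _ ⟨π', hπ', rfl⟩
    simp only [stateEntropy_dbar_fork hγ hπ']
    linarith [Real.binEntropy_le_log_two (p := π' 0 0)]
  have huniform : (fun _ _ => 2⁻¹ : Fin 3 → Fin 2 → ℝ) ∈ policySet (Fin 3) (Fin 2) :=
    ⟨fun _ _ => by norm_num, fun _ => by norm_num [Fin.sum_univ_two]⟩
  have hπ0 : Real.binEntropy (π 0 0) = 0 := by
    obtain ⟨a, ha, hb⟩ := hdet 0
    fin_cases a
    · simp only [Fin.zero_eta, Fin.isValue] at ha
      simp [ha]
    · simp [hb 0 (by decide)]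
  refine lt_csSup_of_lt hbdd ⟨_, huniform, rfl⟩ ?_
  simp only [stateEntropy_dbar_fork hγ hπ, stateEntropy_dbar_fork hγ huniform, hπ0,
    Real.binEntropy_two_inv]
  linarith [Real.log_pos (one_lt_two : (1 : ℝ) < 2)]
end
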